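/- arXiv:2402.18265 — 7 statements merged into one kernel-verified Lean document; each statement's English description precedes it below -/
import Mathlib

section
/- Let G be a finite simple graph and K a set of vertices of G. If K is a potential maximal clique of G (i.e., K induces a maximal clique in some minimal triangulation of G), then no connected component of G \ K is full for K; that is, for every connected component C of G minus K, there exists a vertex of K with no neighbor in C. -/
open SimpleGraph

variable {V : Type*}

/-- `C` is a connected component of `G \ K`:
nonempty, disjoint from `K`, connected, and maximal such. -/
def IsCompOf (G : SimpleGraph V) (K C : Set V) : Prop :=
  C.Nonempty ∧ Disjoint C K ∧ (G.induce C).Connected ∧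
    ∀ D : Set V, C ⊆ D → Disjoint D K → (G.induce D).Connected → D = C

/-- The neighborhood of a set `C`: vertices outside `C` with a neighbor in `C`. -/
def nbhd (G : SimpleGraph V) (C : Set V) : Set V :=
  {v | v ∉ C ∧ ∃ u ∈ C, G.Adj u v}

/-- `C` is a full component for `K` in `G`. -/
def IsFullComp (G : SimpleGraph V) (K C : Set V) : Prop :=
  IsCompOf G K C ∧ ∀ v ∈ K, ∃ u ∈ C, G.Adj u v

/-- Bouchitté–Todinca characterization of potential maximal cliques:
(a) no full component, (b) non-adjacent pairs of `K` covered by a common component. -/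
def IsPMC (G : SimpleGraph V) (K : Set V) : Prop :=
  (∀ C : Set V, IsCompOf G K C → ¬ ∀ v ∈ K, ∃ u ∈ C, G.Adj u v) ∧
  (∀ x ∈ K, ∀ y ∈ K, x ≠ y → ¬ G.Adj x y →
    ∃ C : Set V, IsCompOf G K C ∧ (∃ u ∈ C, G.Adj u x) ∧ (∃ u ∈ C, G.Adj u y))

/-- A graph is chordal if it has no induced cycle of length at least 4. -/
def IsChordal (G : SimpleGraph V) : Prop :=
  ∀ n : ℕ, 4 ≤ n → IsEmpty (SimpleGraph.cycleGraph n ↪g G)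

/-- `H` is a minimal triangulation (minimal chordal completion) of `G`. -/
def IsMinimalTriangulation (G H : SimpleGraph V) : Prop :=
  G ≤ H ∧ IsChordal H ∧ ∀ H' : SimpleGraph V, G ≤ H' → H' ≤ H → IsChordal H' → H' = H

/-- `K` is an inclusion-maximal clique of `G`. -/
def IsMaxClique (G : SimpleGraph V) (K : Set V) : Prop :=
  G.IsClique K ∧ ∀ K' : Set V, K ⊆ K' → G.IsClique K' → K' = K

/-- `K` is a potential maximal clique of `G`: a maximal clique of some minimal
triangulation of `G`. -/
def IsPMCtri (G : SimpleGraph V) (K : Set V) : Prop :=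
  ∃ H : SimpleGraph V, IsMinimalTriangulation G H ∧ IsMaxClique H K

/-! If a component `C` of `G \ K` were full for `K`, it would remain connected and full in every
chordal supergraph `H` of `G`. In a chordal graph, a connected set seeing every vertex of a finite
clique disjoint from it contains a vertex adjacent to the whole clique: add the clique vertices one
at a time, and when the current dominator `d` misses the new vertex `s`, move to the last vertex
before `s` on a shortest path from `d` to `s`; any vertex seen by both `d` and `s` but not by that
vertex would close a chordless cycle of length at least four. Hence `K` is not a maximal clique of
`H`. -/

theorem cycleGraph_adj_iff_val {n : ℕ} {u v : Fin (n + 2)} :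
    (cycleGraph (n + 2)).Adj u v ↔
      u.val + 1 = v.val ∨ v.val + 1 = u.val ∨
        (u.val = 0 ∧ v.val = n + 1) ∨ (v.val = 0 ∧ u.val = n + 1) := by
  have hsub (a b : Fin (n + 2)) :
      (a - b).val = 1 ↔ b.val + 1 = a.val ∨ (a.val = 0 ∧ b.val = n + 1) := by
    rcases le_or_gt b a with h | h
    · rw [Fin.sub_val_of_le h]; have := Fin.le_def.mp h; omega
    · rw [Fin.coe_sub_iff_lt.mpr h]; have := Fin.lt_def.mp h; omega
  rw [cycleGraph_adj', hsub, hsub]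
  omega

def IsChordlessPath (H : SimpleGraph V) (w : ℕ → V) (m : ℕ) : Prop :=
  Set.InjOn w {a | a ≤ m} ∧ ∀ a ≤ m, ∀ b ≤ m, H.Adj (w a) (w b) ↔ a + 1 = b ∨ b + 1 = a

section ChordlessPath

variable {H : SimpleGraph V} {w : ℕ → V} {m : ℕ}

theorem IsChordlessPath.drop (hw : IsChordlessPath H w m) {i : ℕ} (hi : i ≤ m) :
    IsChordlessPath H (fun a => w (i + a)) (m - i) := by
  refine ⟨fun a (ha : a ≤ m - i) b (hb : b ≤ m - i) hab => ?_, fun a ha b hb => ?_⟩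
  · have := hw.1 (show i + a ≤ m by omega) (show i + b ≤ m by omega) hab
    omega
  · rw [hw.2 (i + a) (by omega) (i + b) (by omega)]
    omega

theorem IsChordlessPath.of_induce {s : Set V} {w : ℕ → s}
    (hw : IsChordlessPath (H.induce s) w m) : IsChordlessPath H (fun a => (w a : V)) m :=
  ⟨fun _ ha _ hb hab => hw.1 ha hb (Subtype.ext hab), hw.2⟩

end ChordlessPath

namespace SimpleGraph.Walk

variable {G : SimpleGraph V} {u v : V}

theorem not_adj_getVert_of_length_eq_dist (p : G.Walk u v) (hp : p.length = G.dist u v)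
    {i j : ℕ} (hij : i + 1 < j) (hj : j ≤ p.length) : ¬ G.Adj (p.getVert i) (p.getVert j) := by
  intro hadj
  have hshort := dist_le ((p.take i).append (cons hadj (p.drop j)))
  simp only [length_append, length_cons, take_length, drop_length] at hshort
  omega

theorem isChordlessPath_getVert_of_length_eq_dist (p : G.Walk u v)
    (hp : p.length = G.dist u v) : IsChordlessPath G p.getVert p.length := by
  refine ⟨(p.isPath_of_length_eq_dist hp).getVert_injOn, fun a ha b hb => ⟨fun hadj => ?_, ?_⟩⟩
  · rcases lt_trichotomy a b with h | rfl | h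
    · by_contra! hne
      exact p.not_adj_getVert_of_length_eq_dist hp (by omega) hb hadj
    · exact (G.irrefl hadj).elim
    · by_contra! hne
      exact p.not_adj_getVert_of_length_eq_dist hp (by omega) ha hadj.symm
  · rintro (rfl | rfl)
    · exact p.adj_getVert_succ (by omega)
    · exact (p.adj_getVert_succ (by omega)).symm

end SimpleGraph.Walk

section Chordal

variable {H : SimpleGraph V}

/-- Otherwise `t, w 0, …, w m` would be a chordless cycle of length `m + 2 ≥ 4`. -/
theorem IsChordal.exists_adj_interior (hch : IsChordal H) {w : ℕ → V} {m : ℕ}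
    (hw : IsChordlessPath H w m) (hm : 2 ≤ m) {t : V} (ht : ∀ a ≤ m, t ≠ w a)
    (h0 : H.Adj t (w 0)) (hm' : H.Adj t (w m)) : ∃ a, 0 < a ∧ a < m ∧ H.Adj t (w a) := by
  by_contra! hno
  have ht_adj : ∀ a ≤ m, H.Adj t (w a) ↔ a = 0 ∨ a = m := by
    intro a ha
    refine ⟨fun h => ?_, by rintro (rfl | rfl) <;> assumption⟩
    by_contra! hne
    exact hno a (by omega) (by omega) h
  let c : ℕ → V := fun j => if j = 0 then t else w (j - 1)
  refine (hch (m + 2) (by omega)).false ⟨⟨fun j => c j.val, fun a b hab => ?_⟩, fun {a b} => ?_⟩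
  · have ha := a.isLt; have hb := b.isLt
    simp only [c] at hab
    split_ifs at hab with h1 h2 h2
    · exact Fin.ext (by omega)
    · exact absurd hab (ht _ (by omega))
    · exact absurd hab.symm (ht _ (by omega))
    · have := hw.1 (show a.val - 1 ≤ m by omega) (show b.val - 1 ≤ m by omega) hab
      exact Fin.ext (by omega)
  · have ha := a.isLt; have hb := b.isLt
    change H.Adj (c a) (c b) ↔ _
    rw [cycleGraph_adj_iff_val]
    simp only [c]
    split_ifs with h1 h2 h2
    · simp only [SimpleGraph.irrefl, false_iff]; omega
    · rw [ht_adj _ (by omega)]; omega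
    · rw [H.adj_comm, ht_adj _ (by omega)]; omega
    · rw [hw.2 _ (by omega) _ (by omega)]; omega

/-- Otherwise the segment from the last `w i` (`i < k`) adjacent to `t` up to `w k` contradicts
`IsChordal.exists_adj_interior`. -/
theorem IsChordal.adj_pred_of_adj_ends (hch : IsChordal H) {w : ℕ → V} {k : ℕ}
    (hw : IsChordlessPath H w k) {t : V} (ht : ∀ a ≤ k, t ≠ w a)
    (h0 : H.Adj t (w 0)) (hk : H.Adj t (w k)) : H.Adj t (w (k - 1)) := by
  classical
  set i := Nat.findGreatest (fun a => H.Adj t (w a)) (k - 1)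
  have hti : H.Adj t (w i) :=
    Nat.findGreatest_spec (P := fun a => H.Adj t (w a)) (Nat.zero_le _) h0
  rcases eq_or_lt_of_le (Nat.findGreatest_le (k - 1) : i ≤ k - 1) with hik | hik
  · rwa [← hik]
  obtain ⟨a, ha0, hak, hta⟩ := hch.exists_adj_interior (hw.drop (by omega)) (by omega)
    (fun a ha => ht (i + a) (by omega)) (by simpa using hti)
    (by rwa [Nat.add_sub_cancel' (by omega)])
  exact (Nat.findGreatest_is_greatest (k := i + a) (show i < i + a by omega) (by omega) hta).elim

/-- The witness is the last vertex before `s` on a shortest path from `d` to `s` in `C ∪ {s}`. -/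
theorem IsChordal.exists_adj_forall_insert (hch : IsChordal H) {C T : Set V}
    (hC : (H.induce C).Connected) {s : V} (hsT : H.IsClique (insert s T))
    (hdisj : Disjoint C (insert s T)) {d : V} (hd : d ∈ C) (hdT : ∀ v ∈ T, H.Adj d v)
    {u : V} (hu : u ∈ C) (hus : H.Adj u s) : ∃ d' ∈ C, ∀ v ∈ insert s T, H.Adj d' v := by
  have hs : s ∉ C := fun hs => hdisj.ne_of_mem hs (Set.mem_insert _ _) rfl
  have hCs : (H.induce (insert s C)).Connected := by
    have := connected_induce_union hC.preconnected (induce_pair_connected_of_adj hus).preconnected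
      hu (by simp) hus
    rwa [Set.union_insert, Set.union_singleton, Set.insert_comm, Set.insert_eq_of_mem hu] at this
  obtain ⟨p, hp⟩ := hCs.exists_walk_length_eq_dist ⟨d, Set.mem_insert_of_mem _ hd⟩
    ⟨s, Set.mem_insert _ _⟩
  set w : ℕ → V := fun a => (p.getVert a : V)
  set k := p.length
  have hw : IsChordlessPath H w k := (p.isChordlessPath_getVert_of_length_eq_dist hp).of_induce
  have hw0 : w 0 = d := by simp only [w, Walk.getVert_zero]
  have hwk : w k = s := by simp only [w, k, Walk.getVert_length]
  have hk : 0 < k := Nat.pos_of_ne_zero fun h => hs (by rw [← hwk, h, hw0]; exact hd)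
  have hwC : ∀ a < k, w a ∈ C := fun a ha =>
    ((p.getVert a).2).resolve_left fun h => by
      have := hw.1 (show a ≤ k by omega) (show k ≤ k from le_rfl) (h.trans hwk.symm)
      omega
  refine ⟨w (k - 1), hwC _ (by omega), fun v hv => ?_⟩
  by_cases hvs : v = s
  · subst hvs
    rw [← hwk]
    exact hw.2 _ (by omega) _ le_rfl |>.mpr (Or.inl (by omega))
  have hvT : v ∈ T := hv.resolve_left hvs
  have hv_off : ∀ a ≤ k, v ≠ w a := by
    intro a ha hva
    rcases eq_or_lt_of_le ha with rfl | ha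
    · exact hvs (hva.trans hwk)
    · exact hdisj.ne_of_mem (hva ▸ hwC a ha) hv rfl
  refine (hch.adj_pred_of_adj_ends hw hv_off ?_ ?_).symm
  · rw [hw0]; exact (hdT v hvT).symm
  · rw [hwk]; exact hsT hv (Set.mem_insert _ _) hvs

theorem IsChordal.exists_adj_forall_of_connected (hch : IsChordal H) {C K : Set V}
    (hC : (H.induce C).Connected) (hK : K.Finite) (hKc : H.IsClique K) (hdisj : Disjoint C K)
    (hfull : ∀ v ∈ K, ∃ u ∈ C, H.Adj u v) : ∃ d ∈ C, ∀ v ∈ K, H.Adj d v := by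
  induction K, hK using Set.Finite.induction_on with
  | empty =>
    obtain ⟨⟨d, hd⟩⟩ := hC.nonempty
    exact ⟨d, hd, by simp⟩
  | @insert s T _ _ ih =>
    obtain ⟨d, hd, hdT⟩ := ih (hKc.subset (Set.subset_insert _ _))
      (hdisj.mono_right (Set.subset_insert _ _)) fun v hv => hfull v (Set.mem_insert_of_mem _ hv)
    obtain ⟨u, hu, hus⟩ := hfull s (Set.mem_insert _ _)
    exact hch.exists_adj_forall_insert hC hKc hdisj hd hdT hu hus

end Chordal

theorem stmt0 [Fintype V] (G : SimpleGraph V) (K : Set V) (hK : IsPMCtri G K) :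
    ∀ C : Set V, IsCompOf G K C → ∃ v ∈ K, ∀ u ∈ C, ¬ G.Adj u v := by
  intro C hC
  obtain ⟨H, ⟨hGH, hch, -⟩, hKc, hKmax⟩ := hK
  obtain ⟨-, hdisj, hconn, -⟩ := hC
  by_contra! hfull
  obtain ⟨d, hd, hdK⟩ := hch.exists_adj_forall_of_connected (hconn.mono fun _ _ h => hGH h)
    K.toFinite hKc hdisj fun v hv => (hfull v hv).imp fun _ => And.imp_right (hGH ·)
  have hdK' : insert d K = K := hKmax _ (Set.subset_insert _ _) (hKc.insert fun v hv _ => hdK v hv)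
  exact hdisj.ne_of_mem hd (hdK' ▸ Set.mem_insert d K) rfl
end

section
/- Let G be a finite simple graph and K a potential maximal clique of G. Then for any two vertices x, y ∈ K with xy not an edge of G, there exists a connected component C of G \ K such that both x and y have a neighbor in C. -/
open SimpleGraph

variable {V : Type*}

/-!
Let `H` be a minimal triangulation with maximal clique `K`, put `S = K \ {x, y}` and let `A` be
the set of vertices reachable from `x` in `G - S`. If `y ∉ A`, delete from `H` every edge between
`A` and the vertices outside `A ∪ S`. No edge of `G` is lost, and the result is still chordal: a
chordless cycle meeting both sides would cross the clique `S` twice at non-consecutive positions.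
Since `xy` is lost, this contradicts minimality. So some `x`–`y` path avoids `S`; its inner
vertices lie outside `K`, in one component of `G \ K` adjacent to both `x` and `y`.
-/

lemma Nat.exists_mem_Ioo_of_forall_mem_succ {α : Type*} {g : ℕ → α} {P S : Set α} {a b : ℕ}
    (hab : a ≤ b) (ha : g a ∈ P) (hb : g b ∉ P ∪ S)
    (hstep : ∀ k, g k ∈ P → g (k + 1) ∈ P ∪ S) : ∃ k ∈ Set.Ioo a b, g k ∈ S := by
  by_contra! hS
  have hP : ∀ k, a ≤ k → k < b → g k ∈ P := by
    intro k hak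
    induction k, hak using Nat.le_induction with
    | base => exact fun _ => ha
    | succ k hak ih =>
      intro hkb
      exact (hstep k (ih (by omega))).resolve_right (hS (k + 1) ⟨by omega, hkb⟩)
  have hab' : a < b := hab.lt_of_ne (by rintro rfl; exact hb (Or.inl ha))
  obtain ⟨c, rfl⟩ : ∃ c, b = c + 1 := ⟨b - 1, by omega⟩
  exact hb (hstep c (hP c (by omega) (by omega)))

namespace SimpleGraph

variable {G : SimpleGraph V}

def reachableAvoiding (G : SimpleGraph V) (S : Set V) (x : V) : Set V :=
  {v | ∃ w : G.Walk x v, ∀ z ∈ w.support, z ∉ S}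

lemma self_mem_reachableAvoiding {S : Set V} {x : V} (hx : x ∉ S) :
    x ∈ G.reachableAvoiding S x :=
  ⟨Walk.nil, by simpa using hx⟩

lemma notMem_of_mem_reachableAvoiding {S : Set V} {x v : V}
    (hv : v ∈ G.reachableAvoiding S x) : v ∉ S :=
  hv.elim fun w hw => hw v w.end_mem_support

lemma mem_reachableAvoiding_of_adj {S : Set V} {x u v : V} (hu : u ∈ G.reachableAvoiding S x)
    (huv : G.Adj u v) (hv : v ∉ S) : v ∈ G.reachableAvoiding S x := by
  obtain ⟨w, hw⟩ := hu
  refine ⟨w.concat huv, fun z hz => ?_⟩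
  rw [Walk.support_concat, List.mem_append, List.mem_singleton] at hz
  rcases hz with hz | rfl
  exacts [hw z hz, hv]

lemma connected_induce_reachableAvoiding {S : Set V} {x : V} (hx : x ∉ S) :
    (G.induce (G.reachableAvoiding S x)).Connected := by
  classical
  refine induce_connected_of_patches x (self_mem_reachableAvoiding hx) fun {v} ⟨w, hw⟩ => ?_
  refine ⟨{z | z ∈ w.support}, fun z hz => ?_, w.start_mem_support, w.end_mem_support,
    w.connected_induce_support.preconnected _ _⟩
  exact ⟨w.takeUntil z hz, fun u hu => hw u (w.support_takeUntil_subset_support hz hu)⟩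

lemma isCompOf_reachableAvoiding {K : Set V} {x : V} (hx : x ∉ K) :
    IsCompOf G K (G.reachableAvoiding K x) := by
  refine ⟨⟨x, self_mem_reachableAvoiding hx⟩,
    Set.disjoint_left.2 fun _ => notMem_of_mem_reachableAvoiding,
    connected_induce_reachableAvoiding hx, fun D hCD hDK hD => ?_⟩
  refine Set.Subset.antisymm (fun d hd => ?_) hCD
  obtain ⟨w⟩ := hD.preconnected ⟨x, hCD (self_mem_reachableAvoiding hx)⟩ ⟨d, hd⟩
  refine ⟨w.map (Embedding.induce D).toHom, fun z hz => ?_⟩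
  obtain ⟨z', -, rfl⟩ := List.mem_map.1 ((Walk.support_map _ w) ▸ hz)
  exact Set.disjoint_left.1 hDK z'.2

lemma exists_adj_of_walk_into {K : Set V} :
    ∀ {a b : V} (w : G.Walk a b), a ∉ K → b ∈ K →
      ∃ v ∈ G.reachableAvoiding K a, ∃ t ∈ w.support, t ∈ K ∧ G.Adj v t
  | _, _, .nil, ha, hb => (ha hb).elim
  | a, _, .cons (v := c) hac w, ha, hb => by
    by_cases hc : c ∈ K
    · exact ⟨a, self_mem_reachableAvoiding ha, c, by simp, hc, hac⟩
    · obtain ⟨v, ⟨p, hp⟩, t, ht, htK, hvt⟩ := exists_adj_of_walk_into w hc hb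
      refine ⟨v, ⟨.cons hac p, fun z hz => ?_⟩, t, by simp [ht], htK, hvt⟩
      rw [Walk.support_cons, List.mem_cons] at hz
      rcases hz with rfl | hz
      exacts [ha, hp z hz]

lemma exists_isCompOf_adj_adj_of_isPath {K : Set V} {x y : V} (hy : y ∈ K) (hne : x ≠ y)
    (hxy : ¬ G.Adj x y) (w : G.Walk x y) (hw : w.IsPath)
    (hwK : ∀ z ∈ w.support, z ∈ K → z = x ∨ z = y) :
    ∃ C : Set V, IsCompOf G K C ∧ (∃ u ∈ C, G.Adj u x) ∧ (∃ u ∈ C, G.Adj u y) := by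
  cases w with
  | nil => exact (hne rfl).elim
  | @cons _ v _ hxv w =>
    have hxw : x ∉ w.support := ((Walk.cons_isPath_iff hxv w).1 hw).2
    have hvK : v ∉ K := fun hvK =>
      (hwK v (by simp) hvK).elim hxv.ne' fun hvy => hxy (hvy ▸ hxv)
    obtain ⟨u, hu, t, ht, htK, hut⟩ := exists_adj_of_walk_into w hvK hy
    obtain rfl : t = y :=
      (hwK t (by simp [ht]) htK).resolve_left fun htx => hxw (htx ▸ ht)
    exact ⟨_, isCompOf_reachableAvoiding hvK, ⟨v, self_mem_reachableAvoiding hvK, hxv.symm⟩,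
      ⟨u, hu, hut⟩⟩

def deleteCrossEdges (H : SimpleGraph V) (A B : Set V) : SimpleGraph V where
  Adj u v := H.Adj u v ∧ ¬(u ∈ A ∧ v ∈ B) ∧ ¬(u ∈ B ∧ v ∈ A)
  symm := ⟨fun _ _ h => ⟨h.1.symm, fun h' => h.2.2 h'.symm, fun h' => h.2.1 h'.symm⟩⟩
  loopless := ⟨fun v h => H.loopless.irrefl v h.1⟩

@[simp]
lemma deleteCrossEdges_adj {H : SimpleGraph V} {A B : Set V} {u v : V} :
    (H.deleteCrossEdges A B).Adj u v ↔ H.Adj u v ∧ ¬(u ∈ A ∧ v ∈ B) ∧ ¬(u ∈ B ∧ v ∈ A) :=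
  Iff.rfl

lemma deleteCrossEdges_le (H : SimpleGraph V) (A B : Set V) : H.deleteCrossEdges A B ≤ H :=
  fun _ _ h => (deleteCrossEdges_adj.1 h).1

section
open Fin.CommRing Fin.NatCast

lemma mem_union_of_cycleGraph_embedding {H : SimpleGraph V} {A S : Set V}
    (hS : H.IsClique S) (hAS : Disjoint A S) {n : ℕ}
    (f : cycleGraph (n + 2) ↪g H.deleteCrossEdges A (A ∪ S)ᶜ) {i j : Fin (n + 2)}
    (hi : f i ∈ A) : f j ∈ A ∪ S := by
  by_contra hj
  -- Walk around the cycle from `i`: both arcs between `i` and `j` must pass through `S`, at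
  -- positions `k₁ < d < k₂` that cannot be consecutive on the cycle, yet `S` is a clique.
  set g : ℕ → V := fun k => f (i + k)
  have hadj_succ k : (H.deleteCrossEdges A (A ∪ S)ᶜ).Adj (g k) (g (k + 1)) :=
    f.map_adj_iff.2 <| cycleGraph_adj.2 <| .inr <| by push_cast; ring
  have hstepA k (hk : g k ∈ A) : g (k + 1) ∈ A ∪ S := by
    by_contra h
    exact (deleteCrossEdges_adj.1 (hadj_succ k)).2.1 ⟨hk, h⟩
  have hstepB k (hk : g k ∈ (A ∪ S)ᶜ) : g (k + 1) ∈ (A ∪ S)ᶜ ∪ S := by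
    by_contra h
    exact (deleteCrossEdges_adj.1 (hadj_succ k)).2.2 ⟨hk, by simp_all⟩
  set d := (j - i).val
  have hgd : g d = f j := by simp [g, d]
  have hgn : g (n + 2) = f i := by simp [g]
  obtain ⟨k₁, ⟨hk₁, hk₁d⟩, hk₁S⟩ := Nat.exists_mem_Ioo_of_forall_mem_succ (P := A) (Nat.zero_le d)
    (by simpa [g] using hi) (by rwa [hgd, ← Set.mem_compl_iff]) hstepA
  obtain ⟨k₂, ⟨hdk₂, hk₂n⟩, hk₂S⟩ := Nat.exists_mem_Ioo_of_forall_mem_succ (P := (A ∪ S)ᶜ)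
    (b := n + 2) (j - i).isLt.le (hgd ▸ hj)
    (by rw [hgn]; simp [hi, Set.disjoint_left.1 hAS hi]) hstepB
  have hval₁ : (k₁ : Fin (n + 2)).val = k₁ := Fin.val_cast_of_lt (by omega)
  have hval₂ : (k₂ : Fin (n + 2)).val = k₂ := Fin.val_cast_of_lt hk₂n
  have hlt : (k₁ : Fin (n + 2)) < k₂ := by
    rw [Fin.lt_def, hval₁, hval₂]; omega
  have hadj : (H.deleteCrossEdges A (A ∪ S)ᶜ).Adj (g k₁) (g k₂) :=
    deleteCrossEdges_adj.2 ⟨hS hk₁S hk₂S (f.injective.ne (by simpa using hlt.ne)), by simp [hk₂S],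
      by simp [hk₁S]⟩
  have hcyc := cycleGraph_adj'.1 (f.map_adj_iff.1 hadj)
  rw [show i + (k₁ : Fin (n + 2)) - (i + k₂) = k₁ - k₂ by ring,
    show i + (k₂ : Fin (n + 2)) - (i + k₁) = k₂ - k₁ by ring, Fin.coe_sub_iff_lt.2 hlt,
    Fin.coe_sub_iff_le.2 hlt.le, hval₁, hval₂] at hcyc
  omega

end

lemma _root_.IsChordal.deleteCrossEdges {H : SimpleGraph V} (hH : IsChordal H) {A S : Set V}
    (hS : H.IsClique S) (hAS : Disjoint A S) : IsChordal (H.deleteCrossEdges A (A ∪ S)ᶜ) := by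
  intro n hn
  obtain ⟨m, rfl⟩ : ∃ m, n = m + 2 := ⟨n - 2, by omega⟩
  refine ⟨fun f => (hH (m + 2) hn).false ⟨f.toEmbedding, fun {i j} => ⟨fun h => ?_,
    fun h => deleteCrossEdges_le _ _ _ (f.map_adj_iff.2 h)⟩⟩⟩
  refine f.map_adj_iff.1 (deleteCrossEdges_adj.2 ⟨h, fun hc => ?_, fun hc => ?_⟩)
  exacts [hc.2 (mem_union_of_cycleGraph_embedding hS hAS f hc.1),
    hc.1 (mem_union_of_cycleGraph_embedding hS hAS f hc.2)]

lemma _root_.IsMinimalTriangulation.mem_reachableAvoiding {G H : SimpleGraph V}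
    (hGH : IsMinimalTriangulation G H) {K : Set V} (hK : H.IsClique K) {x y : V} (hx : x ∈ K)
    (hy : y ∈ K) (hxy : x ≠ y) : y ∈ G.reachableAvoiding (K \ {x, y}) x := by
  obtain ⟨hle, hH, hmin⟩ := hGH
  set S := K \ {x, y}
  set A := G.reachableAvoiding S x
  by_contra hyA
  have hG : G ≤ H.deleteCrossEdges A (A ∪ S)ᶜ := fun u v huv =>
    deleteCrossEdges_adj.2 ⟨hle huv,
      fun ⟨hu, hv⟩ => hv (.inl (mem_reachableAvoiding_of_adj hu huv fun hvS => hv (.inr hvS))),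
      fun ⟨hu, hv⟩ => hu (.inl (mem_reachableAvoiding_of_adj hv huv.symm fun huS => hu (.inr huS)))⟩
  have hAS : Disjoint A S := Set.disjoint_left.2 fun _ => notMem_of_mem_reachableAvoiding
  have heq := hmin _ hG (deleteCrossEdges_le H _ _)
    (hH.deleteCrossEdges (hK.subset Set.sdiff_subset) hAS)
  have hxy' : (H.deleteCrossEdges A (A ∪ S)ᶜ).Adj x y := by
    rw [heq]; exact hK hx hy hxy
  exact (deleteCrossEdges_adj.1 hxy').2.1
    ⟨self_mem_reachableAvoiding (by simp [S]), by simp [S, A, hyA]⟩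

end SimpleGraph

theorem stmt1_general (G : SimpleGraph V) (K : Set V) (hK : IsPMCtri G K) :
    ∀ x ∈ K, ∀ y ∈ K, x ≠ y → ¬ G.Adj x y →
      ∃ C : Set V, IsCompOf G K C ∧ (∃ u ∈ C, G.Adj u x) ∧ (∃ u ∈ C, G.Adj u y) := by
  classical
  obtain ⟨H, hGH, hKH, -⟩ := hK
  intro x hx y hy hxy hnadj
  obtain ⟨w, hw⟩ := hGH.mem_reachableAvoiding hKH hx hy hxy
  refine exists_isCompOf_adj_adj_of_isPath hy hxy hnadj w.bypass w.bypass_isPath fun z hz hzK => ?_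
  by_contra h
  exact hw z (w.support_bypass_subset_support hz) ⟨hzK, by simpa using h⟩

theorem stmt1 [Fintype V] (G : SimpleGraph V) (K : Set V) (hK : IsPMCtri G K) :
    ∀ x ∈ K, ∀ y ∈ K, x ≠ y → ¬ G.Adj x y →
      ∃ C : Set V, IsCompOf G K C ∧ (∃ u ∈ C, G.Adj u x) ∧ (∃ u ∈ C, G.Adj u y) :=
  stmt1_general G K hK
end

section
/- Let G be a finite simple graph and K ⊆ V(G). Suppose that (a) no connected component of G \ K is full for K, and (b) for every pair of non-adjacent vertices x, y ∈ K there is a connected component C of G \ K with x, y ∈ N(C). Then K is a potential maximal clique of G, i.e., K is a maximal clique of some minimal triangulation of G. -/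
open SimpleGraph

variable {V : Type*}

/-!
Let `H₀` be `G` with `K` and every `C ∪ N(C)` (`C` a component of `G \ K`) made complete.
Every vertex outside `K` is simplicial in `H₀` and `K` is a clique, so `H₀` is chordal, and by
finiteness it contains a minimal triangulation `H` of `G`.

`K` is a clique of `H`: if `x, y ∈ K` were non-adjacent, (b) gives a component `C` with
`x, y ∈ N(C)` and (a) a vertex `z ∈ K` with no neighbour in `C`; applying (b) to the pairs
`x, z` and `y, z` yields an `x`–`y` walk avoiding `C ∪ N(C)`. No edge of `H₀` joins `C` to the
complement of `C ∪ N(C)`, so shortest `x`–`y` paths through `C` and through that complement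
close up to a chordless cycle of length at least four in `H`.
`K` is a maximal clique of `H`: a vertex `v ∉ K` adjacent in `H` to all of `K` lies in some
component `C`, and its `H₀`-neighbours lie in `C ∪ N(C)`, so `K ⊆ N(C)` and `C` would be full.
-/

open SimpleGraph

lemma cycleGraph_adj_iff_of_lt {n : ℕ} {k l : Fin n} (hkl : k < l) :
    (cycleGraph n).Adj k l ↔ l.val = k.val + 1 ∨ (k.val = 0 ∧ l.val + 1 = n) := by
  rw [cycleGraph_adj', Fin.coe_sub_iff_lt.mpr hkl, Fin.coe_sub_iff_le.mpr hkl.le]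
  have := l.isLt
  have : k.val < l.val := hkl
  omega

lemma cycleGraph_pred_ne_succ_and_not_adj {m : ℕ} (i : Fin (m + 4)) :
    i - 1 ≠ i + 1 ∧ ¬ (cycleGraph (m + 4)).Adj (i - 1) (i + 1) := by
  have h2 : (i + 1) - (i - 1) = 1 + 1 := by abel
  have h2' : (i - 1) - (i + 1) = -(1 + 1) := by abel
  have hval : ((1 + 1 : Fin (m + 4)) : ℕ) = 2 := by simp [Fin.val_add]
  have hval' : ((-(1 + 1) : Fin (m + 4)) : ℕ) = m + 2 := by
    rw [neg_eq_zero_sub, Fin.sub_def]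
    simp only [hval, Fin.val_zero]
    rw [Nat.mod_eq_of_lt (by omega)]
    omega
  rw [cycleGraph_adj, h2, h2', ← sub_ne_zero, h2']
  simp only [ne_eq, Fin.ext_iff, hval, hval', Fin.val_one, Fin.val_zero]
  omega

theorem isChordal_of_isClique_of_simplicial {H : SimpleGraph V} {K : Set V}
    (hK : H.IsClique K) (hsimp : ∀ v ∉ K, H.IsClique (H.neighborSet v)) : IsChordal H := by
  intro n hn
  obtain ⟨m, rfl⟩ : ∃ m, n = m + 4 := ⟨n - 4, by omega⟩
  refine ⟨fun f => ?_⟩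
  by_cases hall : ∀ i, f i ∈ K
  · obtain ⟨hne, hnadj⟩ := cycleGraph_pred_ne_succ_and_not_adj (0 : Fin (m + 4))
    exact hnadj (f.map_adj_iff.mp (hK (hall _) (hall _) (f.injective.ne hne)))
  · obtain ⟨i, hi⟩ := not_forall.mp hall
    obtain ⟨hne, hnadj⟩ := cycleGraph_pred_ne_succ_and_not_adj i
    have hpred : H.Adj (f i) (f (i - 1)) := f.map_adj_iff.mpr (by rw [cycleGraph_adj]; simp)
    have hsucc : H.Adj (f i) (f (i + 1)) := f.map_adj_iff.mpr (by rw [cycleGraph_adj]; simp)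
    exact hnadj (f.map_adj_iff.mp (hsimp _ hi hpred hsucc (f.injective.ne hne)))

namespace SimpleGraph.Walk

variable {H : SimpleGraph V}

lemma nonempty_cycleGraph_embedding {x : V} (c : H.Walk x x)
    (hinj : ∀ i j, i < j → j < c.length → c.getVert i ≠ c.getVert j)
    (hchord : ∀ i j, i + 1 < j → j < c.length → ¬ (i = 0 ∧ j + 1 = c.length) →
      ¬ H.Adj (c.getVert i) (c.getVert j)) :
    Nonempty (cycleGraph c.length ↪g H) := by
  have adj_iff_of_lt : ∀ k l : Fin c.length, k < l →
      (H.Adj (c.getVert k) (c.getVert l) ↔ (cycleGraph c.length).Adj k l) := by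
    intro k l hkl
    have hkl' : k.val < l.val := hkl
    rw [cycleGraph_adj_iff_of_lt hkl]
    refine ⟨fun h => ?_, ?_⟩
    · by_contra hne
      exact hchord k l (by omega) l.isLt (by omega) h
    · rintro (hsucc | ⟨hk, hl⟩)
      · exact hsucc ▸ c.adj_getVert_succ (by omega)
      · have hwrap := c.adj_getVert_succ (i := l) (by omega)
        rw [hl, getVert_length] at hwrap
        rw [hk, getVert_zero]
        exact hwrap.symm
  refine ⟨⟨⟨fun k => c.getVert k, fun k l hkl => ?_⟩, fun {k l} => ?_⟩⟩
  · by_contra hne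
    rcases lt_or_gt_of_ne hne with h | h
    · exact hinj k l h l.isLt hkl
    · exact hinj l k h k.isLt hkl.symm
  · rcases lt_trichotomy k l with h | rfl | h
    · exact adj_iff_of_lt k l h
    · simp
    · rw [H.adj_comm, (cycleGraph _).adj_comm]
      exact adj_iff_of_lt l k h

lemma nonempty_cycleGraph_embedding_append_reverse {x y : V} {p q : H.Walk x y}
    (hp : p.IsPath) (hq : q.IsPath)
    (hpc : ∀ i j, i + 1 < j → j ≤ p.length → ¬ H.Adj (p.getVert i) (p.getVert j))
    (hqc : ∀ i j, i + 1 < j → j ≤ q.length → ¬ H.Adj (q.getVert i) (q.getVert j))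
    (hpq : ∀ i j, 0 < i → i < p.length → 0 < j → j < q.length →
      p.getVert i ≠ q.getVert j ∧ ¬ H.Adj (p.getVert i) (q.getVert j)) :
    Nonempty (cycleGraph (p.append q.reverse).length ↪g H) := by
  set c := p.append q.reverse
  have hn : c.length = p.length + q.length := by simp [c]
  have hc_p : ∀ m ≤ p.length, c.getVert m = p.getVert m := fun m hm => by
    simp [c, getVert_append', hm]
  have hc_q : ∀ m, p.length ≤ m → m ≤ c.length → c.getVert m = q.getVert (c.length - m) := by
    intro m hm hmn
    rcases hm.eq_or_lt with rfl | hm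
    · rw [hc_p _ le_rfl, getVert_length, hn, Nat.add_sub_cancel_left, getVert_length]
    · rw [getVert_append', if_neg hm.not_ge, getVert_reverse, hn]
      congr 1
      omega
  have hc_0 : c.getVert 0 = q.getVert 0 := by rw [getVert_zero, getVert_zero]
  have hp_inj := hp.getVert_injOn
  have hq_inj := hq.getVert_injOn
  -- position `0` is also the start of `q`
  have position_cases : ∀ i j, i < j → j < c.length → (j ≤ p.length) ∨ (p.length ≤ i) ∨
      (i = 0 ∧ p.length < j) ∨ (0 < i ∧ i < p.length ∧ p.length < j) := by
    intro i j _ _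
    omega
  refine c.nonempty_cycleGraph_embedding (fun i j hij hj => ?_) (fun i j hij hj hwrap => ?_)
  · rcases position_cases i j hij hj with h | h | ⟨rfl, h⟩ | ⟨h0, hi, h⟩
    · rw [hc_p i (by omega), hc_p j h]
      exact fun he => hij.ne (hp_inj (by simp; omega) (by simp; omega) he)
    · rw [hc_q i h (by omega), hc_q j (by omega) hj.le]
      exact fun he => hij.ne' (by have := hq_inj (by simp; omega) (by simp; omega) he; omega)
    · rw [hc_0, hc_q j h.le hj.le]
      exact fun he => by have := hq_inj (by simp) (by simp; omega) he; omega
    · rw [hc_p i hi.le, hc_q j h.le hj.le]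
      exact (hpq i _ h0 hi (by omega) (by omega)).1
  · rcases position_cases i j (by omega) hj with h | h | ⟨rfl, h⟩ | ⟨h0, hi, h⟩
    · rw [hc_p i (by omega), hc_p j h]
      exact hpc i j hij h
    · rw [hc_q i h (by omega), hc_q j (by omega) hj.le, H.adj_comm]
      exact hqc _ _ (by omega) (by omega)
    · rw [hc_0, hc_q j h.le hj.le]
      exact hqc _ _ (by omega) (by omega)
    · rw [hc_p i hi.le, hc_q j h.le hj.le]
      exact (hpq i _ h0 hi (by omega) (by omega)).2

/-- A shortest walk inside `S` is a path without chords. -/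
lemma exists_isPath_chordless {S : Set V} {x y : V} (p₀ : H.Walk x y)
    (hp₀ : ∀ v ∈ p₀.support, v ∈ S) :
    ∃ p : H.Walk x y, p.IsPath ∧ (∀ v ∈ p.support, v ∈ S) ∧
      ∀ i j, i + 1 < j → j ≤ p.length → ¬ H.Adj (p.getVert i) (p.getVert j) := by
  classical
  obtain ⟨p, hpS, hmin⟩ := (InvImage.wf Walk.length wellFounded_lt).has_min
    {q : H.Walk x y | ∀ v ∈ q.support, v ∈ S} ⟨p₀, hp₀⟩
  have hmin' : ∀ q : H.Walk x y, (∀ v ∈ q.support, v ∈ S) → p.length ≤ q.length :=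
    fun q hq => not_lt.mp (hmin q hq)
  refine ⟨p, ?_, hpS, fun i j hij hj hadj => ?_⟩
  · rw [← bypass_eq_self_of_length_le_length_bypass p
      (hmin' _ fun v hv => hpS v (support_bypass_subset_support p hv))]
    exact bypass_isPath p
  · let shortcut : H.Walk x y := (p.take i).append (cons hadj (p.drop j))
    have hS : ∀ v ∈ shortcut.support, v ∈ S := by
      intro v hv
      simp only [shortcut, mem_support_append_iff, support_cons, List.mem_cons,
        support_take, drop_support_eq_support_drop_min] at hv
      rcases hv with hv | rfl | hv
      · exact hpS v (List.mem_of_mem_take hv)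
      · exact hpS _ (p.getVert_mem_support i)
      · exact hpS v (List.mem_of_mem_drop hv)
    have := hmin' shortcut hS
    simp only [shortcut, length_append, take_length, length_cons, drop_length] at this
    omega

lemma IsPath.getVert_mem_of_lt_length {x y : V} {p : H.Walk x y} (hp : p.IsPath) {S : Set V}
    (hS : ∀ v ∈ p.support, v ∈ insert x (insert y S)) {i : ℕ} (h0 : 0 < i)
    (hi : i < p.length) : p.getVert i ∈ S := by
  rcases hS _ (p.getVert_mem_support i) with h | h | h
  · exact absurd ((hp.getVert_eq_start_iff hi.le).mp h) h0.ne'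
  · exact absurd ((hp.getVert_eq_end_iff hi.le).mp h) hi.ne
  · exact h

end SimpleGraph.Walk

theorem IsChordal.adj_of_separated_walks {H : SimpleGraph V} (hH : IsChordal H) {S T : Set V}
    (hST : ∀ s ∈ S, ∀ t ∈ T, s ≠ t ∧ ¬ H.Adj s t) {x y : V} (hxy : x ≠ y)
    (p₀ : H.Walk x y) (hp₀ : ∀ v ∈ p₀.support, v ∈ insert x (insert y S))
    (q₀ : H.Walk x y) (hq₀ : ∀ v ∈ q₀.support, v ∈ insert x (insert y T)) : H.Adj x y := by
  by_contra hnadj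
  have two_le_length (r : H.Walk x y) : 2 ≤ r.length := by
    by_contra! h
    obtain h | h : r.length = 0 ∨ r.length = 1 := by omega
    · exact hxy (Walk.eq_of_length_eq_zero h)
    · exact hnadj (Walk.adj_of_length_eq_one h)
  obtain ⟨p, hp, hpS, hpc⟩ := p₀.exists_isPath_chordless hp₀
  obtain ⟨q, hq, hqT, hqc⟩ := q₀.exists_isPath_chordless hq₀
  obtain ⟨f⟩ := Walk.nonempty_cycleGraph_embedding_append_reverse hp hq hpc hqc
    fun i j hi0 hi hj0 hj => hST _ (hp.getVert_mem_of_lt_length hpS hi0 hi)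
      _ (hq.getVert_mem_of_lt_length hqT hj0 hj)
  have h4 : 4 ≤ (p.append q.reverse).length := by
    have := two_le_length p
    have := two_le_length q
    simp only [Walk.length_append, Walk.length_reverse]
    omega
  exact (hH _ h4).false f

theorem exists_isMinimalTriangulation_le [Finite V] {G H₀ : SimpleGraph V} (hGH₀ : G ≤ H₀)
    (hH₀ : IsChordal H₀) : ∃ H, IsMinimalTriangulation G H ∧ H ≤ H₀ := by
  obtain ⟨H, hHH₀, ⟨hGH, hH⟩, hmin⟩ :=
    (Set.toFinite {H : SimpleGraph V | G ≤ H ∧ IsChordal H}).exists_le_minimal ⟨hGH₀, hH₀⟩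
  exact ⟨H, ⟨hGH, hH, fun H' hGH' hH'H hH' => le_antisymm hH'H (hmin ⟨hGH', hH'⟩ hH'H)⟩, hHH₀⟩

section Components

variable {G : SimpleGraph V} {K C : Set V}

lemma SimpleGraph.Reachable.exists_walk_of_induce {S : Set V} {a b : V} {ha : a ∈ S}
    {hb : b ∈ S} (h : (G.induce S).Reachable ⟨a, ha⟩ ⟨b, hb⟩) :
    ∃ p : G.Walk a b, ∀ v ∈ p.support, v ∈ S := by
  obtain ⟨w⟩ := h
  refine ⟨w.map (Embedding.induce S).toHom, fun v hv => ?_⟩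
  obtain ⟨u, -, rfl⟩ := List.mem_map.mp (Walk.support_map _ w ▸ hv)
  exact u.2

/-- The vertex set of the component of `G \ K` containing `v` (empty if `v ∈ K`). -/
def compOf (G : SimpleGraph V) (K : Set V) (v : V) : Set V :=
  {w | ∃ p : G.Walk v w, ∀ x ∈ p.support, x ∉ K}

lemma mem_compOf_self {v : V} (hv : v ∉ K) : v ∈ compOf G K v :=
  ⟨.nil, by simpa using hv⟩

lemma disjoint_compOf (v : V) : Disjoint (compOf G K v) K :=
  Set.disjoint_left.mpr fun w ⟨p, hp⟩ => hp w p.end_mem_support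

lemma SimpleGraph.Walk.support_subset_compOf [DecidableEq V] {v w : V} (p : G.Walk v w)
    (hp : ∀ x ∈ p.support, x ∉ K) : ∀ u ∈ p.support, u ∈ compOf G K v :=
  fun u hu => ⟨p.takeUntil u hu, fun x hx => hp x (p.support_takeUntil_subset_support hu hx)⟩

lemma subset_compOf {D : Set V} (hD : (G.induce D).Connected) (hDK : Disjoint D K) {v : V}
    (hv : v ∈ D) : D ⊆ compOf G K v := fun w hw =>
  let ⟨p, hp⟩ := (hD.preconnected ⟨v, hv⟩ ⟨w, hw⟩).exists_walk_of_induce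
  ⟨p, fun x hx => Set.disjoint_left.mp hDK (hp x hx)⟩

lemma isCompOf_compOf {v : V} (hv : v ∉ K) : IsCompOf G K (compOf G K v) := by
  classical
  refine ⟨⟨v, mem_compOf_self hv⟩, disjoint_compOf v, ?_, fun D hD hDK hconn => ?_⟩
  · refine induce_connected_of_patches v (mem_compOf_self hv) fun {w} ⟨p, hp⟩ => ?_
    exact ⟨{x | x ∈ p.support}, p.support_subset_compOf hp, p.start_mem_support,
      p.end_mem_support, p.connected_induce_support.preconnected _ _⟩
  · exact (subset_compOf hconn hDK (hD (mem_compOf_self hv))).antisymm hD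

lemma IsCompOf.eq_compOf (hC : IsCompOf G K C) {v : V} (hv : v ∈ C) : C = compOf G K v :=
  (hC.2.2.2 _ (subset_compOf hC.2.2.1 hC.2.1 hv) (disjoint_compOf v)
    (isCompOf_compOf (Set.disjoint_left.mp hC.2.1 hv)).2.2.1).symm

lemma IsCompOf.eq_of_mem {C' : Set V} (hC : IsCompOf G K C) (hC' : IsCompOf G K C') {v : V}
    (hv : v ∈ C) (hv' : v ∈ C') : C = C' := by
  rw [hC.eq_compOf hv, hC'.eq_compOf hv']

lemma exists_isCompOf_mem {v : V} (hv : v ∉ K) : ∃ C, IsCompOf G K C ∧ v ∈ C :=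
  ⟨compOf G K v, isCompOf_compOf hv, mem_compOf_self hv⟩

lemma mem_union_nbhd_of_adj {u w : V} (hu : u ∈ C) (h : G.Adj u w) : w ∈ C ∪ nbhd G C := by
  by_cases hw : w ∈ C
  · exact Or.inl hw
  · exact Or.inr ⟨hw, u, hu, h⟩

lemma IsCompOf.nbhd_subset (hC : IsCompOf G K C) : nbhd G C ⊆ K := by
  rintro w ⟨hwC, u, hu, huw⟩
  by_contra hwK
  refine hwC (hC.eq_compOf hu ▸ ⟨huw.toWalk, fun x hx => ?_⟩)
  simp only [Adj.support_toWalk, List.mem_cons, List.not_mem_nil, or_false] at hx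
  rcases hx with rfl | rfl
  · exact Set.disjoint_left.mp hC.2.1 hu
  · exact hwK

lemma IsCompOf.subset_compl_of_ne {C' : Set V} (hC : IsCompOf G K C) (hC' : IsCompOf G K C')
    (hne : C' ≠ C) : C' ⊆ (C ∪ nbhd G C)ᶜ := by
  rintro v hv (hvC | hvN)
  · exact hne (hC'.eq_of_mem hC hv hvC)
  · exact Set.disjoint_left.mp hC'.2.1 hv (hC.nbhd_subset hvN)

lemma IsCompOf.exists_walk_of_mem_nbhd (hC : IsCompOf G K C) {x y : V} (hx : x ∈ nbhd G C)
    (hy : y ∈ nbhd G C) : ∃ p : G.Walk x y, ∀ v ∈ p.support, v ∈ insert x (insert y C) := by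
  obtain ⟨-, u, hu, hux⟩ := hx
  obtain ⟨-, w, hw, hwy⟩ := hy
  obtain ⟨r, hr⟩ := (hC.2.2.1.preconnected ⟨u, hu⟩ ⟨w, hw⟩).exists_walk_of_induce
  refine ⟨.cons hux.symm (r.concat hwy), fun v hv => ?_⟩
  simp only [Walk.support_cons, Walk.support_concat, List.mem_cons, List.mem_append,
    List.not_mem_nil, or_false] at hv
  rcases hv with rfl | hv | rfl
  · exact Set.mem_insert _ _
  · exact Set.mem_insert_of_mem _ (Set.mem_insert_of_mem _ (hr v hv))
  · exact Set.mem_insert_of_mem _ (Set.mem_insert _ _)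

end Components

section Completion

variable {G : SimpleGraph V} {K : Set V}

def pmcCompletion (G : SimpleGraph V) (K : Set V) : SimpleGraph V where
  Adj u v := u ≠ v ∧ ((u ∈ K ∧ v ∈ K) ∨
    ∃ C, IsCompOf G K C ∧ u ∈ C ∪ nbhd G C ∧ v ∈ C ∪ nbhd G C)
  symm := ⟨fun _ _ ⟨hne, h⟩ => ⟨hne.symm, h.imp And.symm fun ⟨C, hC, hu, hv⟩ => ⟨C, hC, hv, hu⟩⟩⟩
  loopless := ⟨fun _ h => h.1 rfl⟩

lemma isClique_pmcCompletion : (pmcCompletion G K).IsClique K :=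
  fun _ hu _ hv hne => ⟨hne, Or.inl ⟨hu, hv⟩⟩

lemma IsCompOf.isClique_pmcCompletion {C : Set V} (hC : IsCompOf G K C) :
    (pmcCompletion G K).IsClique (C ∪ nbhd G C) :=
  fun _ hu _ hv hne => ⟨hne, Or.inr ⟨C, hC, hu, hv⟩⟩

lemma le_pmcCompletion : G ≤ pmcCompletion G K := by
  intro u v huv
  by_cases hu : u ∈ K
  · by_cases hv : v ∈ K
    · exact isClique_pmcCompletion hu hv huv.ne
    · obtain ⟨C, hC, hvC⟩ := exists_isCompOf_mem (G := G) hv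
      exact hC.isClique_pmcCompletion (mem_union_nbhd_of_adj hvC huv.symm) (Or.inl hvC) huv.ne
  · obtain ⟨C, hC, huC⟩ := exists_isCompOf_mem (G := G) hu
    exact hC.isClique_pmcCompletion (Or.inl huC) (mem_union_nbhd_of_adj huC huv) huv.ne

lemma IsCompOf.mem_of_pmcCompletion_adj {C : Set V} (hC : IsCompOf G K C) {u w : V}
    (hu : u ∈ C) (h : (pmcCompletion G K).Adj u w) : w ∈ C ∪ nbhd G C := by
  have huK : u ∉ K := Set.disjoint_left.mp hC.2.1 hu
  obtain ⟨-, ⟨hu', -⟩ | ⟨C', hC', hu', hw⟩⟩ := h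
  · exact absurd hu' huK
  · obtain huC' | huN := hu'
    · rwa [hC.eq_of_mem hC' hu huC']
    · exact absurd (hC'.nbhd_subset huN) huK

lemma isChordal_pmcCompletion : IsChordal (pmcCompletion G K) := by
  refine isChordal_of_isClique_of_simplicial isClique_pmcCompletion fun v hv => ?_
  obtain ⟨C, hC, hvC⟩ := exists_isCompOf_mem (G := G) hv
  exact hC.isClique_pmcCompletion.subset fun w hw => hC.mem_of_pmcCompletion_adj hvC hw

end Completion

section PotentialMaximalClique

variable {G H : SimpleGraph V} {K : Set V}

lemma IsCompOf.exists_walk_outside_union_nbhd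
    (hb : ∀ x ∈ K, ∀ y ∈ K, x ≠ y → ¬ G.Adj x y →
      ∃ C : Set V, IsCompOf G K C ∧ x ∈ nbhd G C ∧ y ∈ nbhd G C)
    {C : Set V} (hC : IsCompOf G K C) {t z : V} (ht : t ∈ K) (hz : z ∈ K) (hzN : z ∉ nbhd G C)
    (htz : t ≠ z) :
    ∃ w : G.Walk t z, ∀ v ∈ w.support, v ∈ insert t (insert z (C ∪ nbhd G C)ᶜ) := by
  by_cases hadj : G.Adj t z
  · refine ⟨hadj.toWalk, fun v hv => ?_⟩
    simp only [Adj.support_toWalk, List.mem_cons, List.not_mem_nil, or_false] at hv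
    rcases hv with rfl | rfl <;> simp
  obtain ⟨C', hC', htC', hzC'⟩ := hb t ht z hz htz hadj
  have hC'B := hC.subset_compl_of_ne hC' fun h => hzN (h ▸ hzC')
  obtain ⟨w, hw⟩ := hC'.exists_walk_of_mem_nbhd htC' hzC'
  exact ⟨w, fun v hv => Set.insert_subset_insert (Set.insert_subset_insert hC'B) (hw v hv)⟩

lemma isClique_of_le_pmcCompletion
    (ha : ∀ C : Set V, IsCompOf G K C → ¬ ∀ v ∈ K, ∃ u ∈ C, G.Adj u v)
    (hb : ∀ x ∈ K, ∀ y ∈ K, x ≠ y → ¬ G.Adj x y →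
      ∃ C : Set V, IsCompOf G K C ∧ x ∈ nbhd G C ∧ y ∈ nbhd G C)
    (hGH : G ≤ H) (hH : H ≤ pmcCompletion G K) (hch : IsChordal H) : H.IsClique K := by
  intro x hx y hy hxy
  by_contra hnadj
  obtain ⟨C, hC, hxC, hyC⟩ := hb x hx y hy hxy fun h => hnadj (hGH h)
  obtain ⟨z, hzK, hzC⟩ : ∃ z ∈ K, ∀ u ∈ C, ¬ G.Adj u z := by simpa using ha C hC
  have hzN : z ∉ nbhd G C := fun ⟨_, u, hu, huz⟩ => hzC u hu huz
  obtain ⟨p, hp⟩ := hC.exists_walk_of_mem_nbhd hxC hyC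
  obtain ⟨wx, hwx⟩ := hC.exists_walk_outside_union_nbhd hb hx hzK hzN fun h => hzN (h ▸ hxC)
  obtain ⟨wy, hwy⟩ := hC.exists_walk_outside_union_nbhd hb hy hzK hzN fun h => hzN (h ▸ hyC)
  set B := (C ∪ nbhd G C)ᶜ
  have hzB : z ∈ B := by
    rintro (hz | hz)
    · exact Set.disjoint_left.mp hC.2.1 hz hzK
    · exact hzN hz
  have hsep : ∀ s ∈ C, ∀ t ∈ B, s ≠ t ∧ ¬ H.Adj s t := fun s hs t ht =>
    ⟨fun h => ht (Or.inl (h ▸ hs)), fun h => ht (hC.mem_of_pmcCompletion_adj hs (hH h))⟩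
  refine hnadj (hch.adj_of_separated_walks hsep hxy (p.mapLe hGH)
    (by simpa [Walk.support_mapLe_eq_support] using hp) ((wx.append wy.reverse).mapLe hGH)
    fun v hv => ?_)
  simp only [Walk.support_mapLe_eq_support, Walk.mem_support_append_iff,
    Walk.support_reverse, List.mem_reverse] at hv
  rcases hv with hv | hv
  · rcases hwx v hv with rfl | rfl | hv <;> simp [*]
  · rcases hwy v hv with rfl | rfl | hv <;> simp [*]

lemma eq_of_isClique_of_le_pmcCompletion
    (ha : ∀ C : Set V, IsCompOf G K C → ¬ ∀ v ∈ K, ∃ u ∈ C, G.Adj u v)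
    (hH : H ≤ pmcCompletion G K) {K' : Set V} (hKK' : K ⊆ K') (hK' : H.IsClique K') :
    K' = K := by
  refine (Set.subset_def.mpr fun v hv => ?_).antisymm hKK'
  by_contra hvK
  refine ha _ (isCompOf_compOf hvK) fun k hk => ?_
  have hvk : v ≠ k := fun h => hvK (h ▸ hk)
  obtain hkC | ⟨-, u, hu, huk⟩ := (isCompOf_compOf hvK).mem_of_pmcCompletion_adj
    (mem_compOf_self hvK) (hH (hK' hv (hKK' hk) hvk))
  · exact absurd hk (Set.disjoint_left.mp (disjoint_compOf v) hkC)
  · exact ⟨u, hu, huk⟩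

end PotentialMaximalClique

theorem stmt2 [Fintype V] (G : SimpleGraph V) (K : Set V)
    (ha : ∀ C : Set V, IsCompOf G K C → ¬ ∀ v ∈ K, ∃ u ∈ C, G.Adj u v)
    (hb : ∀ x ∈ K, ∀ y ∈ K, x ≠ y → ¬ G.Adj x y →
      ∃ C : Set V, IsCompOf G K C ∧ x ∈ nbhd G C ∧ y ∈ nbhd G C) :
    IsPMCtri G K := by
  obtain ⟨H, hH, hHK⟩ :=
    exists_isMinimalTriangulation_le (le_pmcCompletion (K := K)) (isChordal_pmcCompletion (G := G))
  exact ⟨H, hH, isClique_of_le_pmcCompletion ha hb hH.1 hHK hH.2.1,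
    fun K' => eq_of_isClique_of_le_pmcCompletion ha hHK⟩
end

section
/- Let G be a finite simple graph, a a vertex of G, and G' = G \ {a}. If K is a potential maximal clique of G', then exactly one of K and K ∪ {a} is a potential maximal clique of G; in particular K and K ∪ {a} cannot both be potential maximal cliques of G. -/
/-!
Let `Ca` be the component of `G - K` containing `a`. The components of `G' - K` are exactly the
components of `G - (K ∪ {a})`, so the hypothesis says that none of these is full for `K` and that
they cover every non-adjacent pair of `K`.

If `Ca` is full for `K`, then `K` is not a PMC of `G`, but `K ∪ {a}` is: a pair `x, a` is covered
because every component of `G - (K ∪ {a})` meeting `Ca` contains a neighbour of `a`.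

Otherwise some `v ∈ K` has no neighbour in `Ca`. Then `Ca` is not full, and the other components
of `G - K` are components of `G - (K ∪ {a})`, so `K` is a PMC of `G`. But `K ∪ {a}` is not: a
component of `G - (K ∪ {a})` adjacent to `a` lies inside `Ca`, so the pair `v, a` is not covered.
-/

open SimpleGraph

variable {V : Type*}

variable {G : SimpleGraph V}

namespace SimpleGraph

lemma connected_induce_image_iff {s : Set V} {C : Set s} :
    (G.induce (Subtype.val '' C)).Connected ↔ ((G.induce s).induce C).Connected := by
  let f : (G.induce s).induce C ↪g G := (Embedding.induce s).comp (Embedding.induce C)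
  have hf : Set.range f = Subtype.val '' C := by
    ext v
    simp only [Set.mem_range, Set.mem_image]
    exact ⟨fun ⟨x, hx⟩ => ⟨x.1, x.2, hx⟩, fun ⟨x, hx, hxv⟩ => ⟨⟨x, hx⟩, hxv⟩⟩
  rw [f.isoInduceRange.connected_iff, hf]

lemma Walk.exists_adj_mem_of_notMem_of_mem (S : Set V) {u w : V} (p : G.Walk u w)
    (hu : u ∉ S) (hw : w ∈ S) :
    ∃ b, ∃ c ∈ p.support, c ∈ S ∧ G.Adj b c ∧ ∃ q : G.Walk u b, ∀ x ∈ q.support, x ∉ S := by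
  induction p with
  | nil => exact absurd hw hu
  | @cons u x w hux p ih =>
    by_cases hx : x ∈ S
    · exact ⟨u, x, by simp, hx, hux, .nil, by simpa using hu⟩
    · obtain ⟨b, c, hc, hcS, hbc, q, hq⟩ := ih hx hw
      refine ⟨b, c, by simp [hc], hcS, hbc, .cons hux q, ?_⟩
      simpa [hu] using hq

end SimpleGraph

/-- The two conditions of `IsPMC G K`, with the components taken in `G - S` instead of `G - K`. -/
def IsPMCWrt (G : SimpleGraph V) (S K : Set V) : Prop :=
  (∀ C : Set V, IsCompOf G S C → ¬ ∀ v ∈ K, ∃ u ∈ C, G.Adj u v) ∧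
  (∀ x ∈ K, ∀ y ∈ K, x ≠ y → ¬ G.Adj x y →
    ∃ C : Set V, IsCompOf G S C ∧ (∃ u ∈ C, G.Adj u x) ∧ (∃ u ∈ C, G.Adj u y))

lemma image_preimage_of_disjoint_compl {s D : Set V} (hD : Disjoint D sᶜ) :
    Subtype.val '' (Subtype.val ⁻¹' D : Set s) = D := by
  rw [Subtype.image_preimage_coe, Set.inter_eq_right.2 (Set.disjoint_compl_right_iff_subset.1 hD)]

lemma disjoint_image_union_compl_iff {s : Set V} {L C : Set s} :
    Disjoint (Subtype.val '' C) (Subtype.val '' L ∪ sᶜ) ↔ Disjoint C L := by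
  rw [Set.disjoint_union_right, Set.disjoint_image_iff Subtype.val_injective, and_iff_left]
  exact Set.disjoint_compl_right_iff_subset.2 (Subtype.coe_image_subset s C)

lemma isCompOf_induce_iff {s : Set V} {L C : Set s} :
    IsCompOf (G.induce s) L C ↔ IsCompOf G (Subtype.val '' L ∪ sᶜ) (Subtype.val '' C) := by
  unfold IsCompOf
  rw [Set.image_nonempty, disjoint_image_union_compl_iff, connected_induce_image_iff]
  refine and_congr_right fun _ => and_congr_right fun _ => and_congr_right fun _ => ?_
  constructor
  · intro hmax D hCD hDL hD
    have hDs := Set.disjoint_union_right.1 hDL |>.2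
    rw [← image_preimage_of_disjoint_compl hDs] at hCD hDL hD ⊢
    rw [Set.image_subset_image_iff Subtype.val_injective] at hCD
    rw [disjoint_image_union_compl_iff] at hDL
    rw [connected_induce_image_iff] at hD
    rw [hmax _ hCD hDL hD]
  · intro hmax D hCD hDL hD
    apply Set.image_injective.2 Subtype.val_injective
    exact hmax _ (Set.image_mono hCD) (disjoint_image_union_compl_iff.2 hDL)
      (connected_induce_image_iff.2 hD)

namespace IsCompOf

variable {K C D : Set V}

lemma subset_of_inter_nonempty (hC : IsCompOf G K C) (hDK : Disjoint D K)
    (hD : (G.induce D).Connected) (hCD : (C ∩ D).Nonempty) : D ⊆ C := by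
  have hunion := hC.2.2.2 (C ∪ D) Set.subset_union_left (Set.disjoint_union_left.2 ⟨hC.2.1, hDK⟩)
    (induce_union_connected hC.2.2.1.preconnected hD.preconnected hCD)
  exact hunion ▸ Set.subset_union_right

lemma subset_of_adj (hC : IsCompOf G K C) (hDK : Disjoint D K) (hD : (G.induce D).Connected)
    {u w : V} (hu : u ∈ D) (hw : w ∈ C) (hadj : G.Adj w u) : D ⊆ C := by
  have hunion := hC.2.2.2 (C ∪ D) Set.subset_union_left (Set.disjoint_union_left.2 ⟨hC.2.1, hDK⟩)
    (connected_induce_union hC.2.2.1.preconnected hD.preconnected hw hu hadj)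
  exact hunion ▸ Set.subset_union_right

lemma union_right_of_disjoint {S : Set V} (hC : IsCompOf G K C) (hCS : Disjoint C S) :
    IsCompOf G (K ∪ S) C :=
  ⟨hC.1, Set.disjoint_union_right.2 ⟨hC.2.1, hCS⟩, hC.2.2.1,
    fun D hCD hDKS hD => hC.2.2.2 D hCD (Set.disjoint_union_right.1 hDKS).1 hD⟩

lemma exists_induce_image_eq {s : Set V} {L : Set s} (hD : IsCompOf G (Subtype.val '' L ∪ sᶜ) D) :
    ∃ C, IsCompOf (G.induce s) L C ∧ Subtype.val '' C = D := by
  have hDs := image_preimage_of_disjoint_compl (Set.disjoint_union_right.1 hD.2.1).2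
  refine ⟨_, isCompOf_induce_iff.2 ?_, hDs⟩
  rwa [hDs]

end IsCompOf

lemma exists_isCompOf_superset {K D : Set V} (hDK : Disjoint D K) (hD : (G.induce D).Connected) :
    ∃ C, IsCompOf G K C ∧ D ⊆ C := by
  obtain ⟨v, hv⟩ := hD.nonempty
  set c := (G.induce Kᶜ).connectedComponentMk ⟨v, Set.disjoint_left.1 hDK hv⟩
  have hc : IsCompOf (G.induce Kᶜ) ∅ c.supp :=
    ⟨⟨_, ConnectedComponent.connectedComponentMk_mem⟩, Set.disjoint_empty _,
      c.connected_toSimpleGraph,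
      fun E hcE _ hE => (c.maximal_connected_induce_supp.2 hE hcE).antisymm hcE⟩
  rw [isCompOf_induce_iff, Set.image_empty, Set.empty_union, compl_compl] at hc
  exact ⟨_, hc, hc.subset_of_inter_nonempty hDK hD
    ⟨v, ⟨_, ConnectedComponent.connectedComponentMk_mem, rfl⟩, hv⟩⟩

lemma IsCompOf.exists_isCompOf_union_singleton_adj {K C : Set V} {a u : V}
    (hC : IsCompOf G K C) (ha : a ∈ C) (hu : u ∈ C) (hua : u ≠ a) :
    ∃ D, IsCompOf G (K ∪ {a}) D ∧ u ∈ D ∧ ∃ b ∈ D, G.Adj b a := by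
  obtain ⟨p⟩ := hC.2.2.1.preconnected ⟨u, hu⟩ ⟨a, ha⟩
  have hpC : ∀ x ∈ (p.map (Embedding.induce C).toHom).support, x ∈ C := by
    simp only [Walk.support_map, List.mem_map]
    rintro _ ⟨x, -, rfl⟩
    exact x.2
  obtain ⟨b, c, hc, hcKa, hbc, q, hq⟩ :=
    (p.map (Embedding.induce C).toHom).exists_adj_mem_of_notMem_of_mem (K ∪ {a})
      (by simpa using ⟨hua, Set.disjoint_left.1 hC.2.1 hu⟩) (by simp)
  have hca : c = a := by
    simpa [Set.disjoint_left.1 hC.2.1 (hpC c hc)] using hcKa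
  obtain ⟨D, hD, hqD⟩ := exists_isCompOf_superset (K := K ∪ {a})
    (Set.disjoint_left.2 hq) q.connected_induce_support
  exact ⟨D, hD, hqD q.start_mem_support, b, hqD q.end_mem_support, hca ▸ hbc⟩

lemma IsPMC.isPMCWrt_image {s : Set V} {L : Set s} (hL : IsPMC (G.induce s) L) :
    IsPMCWrt G (Subtype.val '' L ∪ sᶜ) (Subtype.val '' L) := by
  constructor
  · intro D hD hfull
    obtain ⟨C, hC, rfl⟩ := hD.exists_induce_image_eq
    refine hL.1 C hC fun v hv => ?_
    obtain ⟨_, ⟨u, hu, rfl⟩, hadj⟩ := hfull v ⟨v, hv, rfl⟩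
    exact ⟨u, hu, hadj⟩
  · rintro _ ⟨x, hx, rfl⟩ _ ⟨y, hy, rfl⟩ hxy hadj
    obtain ⟨C, hC, ⟨u, hu, hux⟩, ⟨w, hw, hwy⟩⟩ :=
      hL.2 x hx y hy (ne_of_apply_ne _ hxy) hadj
    exact ⟨_, isCompOf_induce_iff.1 hC, ⟨u, ⟨u, hu, rfl⟩, hux⟩, ⟨w, ⟨w, hw, rfl⟩, hwy⟩⟩

section

variable {K Ca : Set V} {a : V}

lemma isPMC_union_singleton (hK : IsPMCWrt G (K ∪ {a}) K) (hCa : IsFullComp G K Ca)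
    (haCa : a ∈ Ca) : IsPMC G (K ∪ {a}) := by
  have hcover_a : ∀ x ∈ K, ¬ G.Adj x a → ∃ D, IsCompOf G (K ∪ {a}) D ∧
      (∃ u ∈ D, G.Adj u x) ∧ ∃ u ∈ D, G.Adj u a := by
    intro x hx hxa
    obtain ⟨u, hu, hux⟩ := hCa.2 x hx
    obtain ⟨D, hD, huD, b, hbD, hba⟩ :=
      hCa.1.exists_isCompOf_union_singleton_adj haCa hu (by rintro rfl; exact hxa hux.symm)
    exact ⟨D, hD, ⟨u, huD, hux⟩, b, hbD, hba⟩
  refine ⟨fun D hD hDfull => hK.1 D hD fun v hv => hDfull v (Or.inl hv), ?_⟩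
  rintro x (hx | rfl) y (hy | rfl) hxy hadj
  · exact hK.2 x hx y hy hxy hadj
  · exact hcover_a x hx hadj
  · obtain ⟨D, hD, hy', hx'⟩ := hcover_a y hy fun h => hadj h.symm
    exact ⟨D, hD, hx', hy'⟩
  · exact absurd rfl hxy

lemma isPMC_of_forall_not_adj (hK : IsPMCWrt G (K ∪ {a}) K) (hCa : IsCompOf G K Ca)
    (haCa : a ∈ Ca) {v : V} (hv : v ∈ K) (hvCa : ∀ u ∈ Ca, ¬ G.Adj u v) : IsPMC G K := by
  constructor
  · intro C hC hfull
    by_cases haC : a ∈ C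
    · have hCCa := hCa.subset_of_inter_nonempty hC.2.1 hC.2.2.1 ⟨a, haCa, haC⟩
      obtain ⟨u, hu, huv⟩ := hfull v hv
      exact hvCa u (hCCa hu) huv
    · exact hK.1 C (hC.union_right_of_disjoint (Set.disjoint_singleton_right.2 haC)) hfull
  · intro x hx y hy hxy hadj
    obtain ⟨D, hD, hxD, hyD⟩ := hK.2 x hx y hy hxy hadj
    obtain ⟨C, hC, hDC⟩ := exists_isCompOf_superset (Set.disjoint_union_right.1 hD.2.1).1 hD.2.2.1
    exact ⟨C, hC, hxD.imp fun _ => And.imp_left (@hDC _), hyD.imp fun _ => And.imp_left (@hDC _)⟩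

lemma not_isPMC_union_singleton (haK : a ∉ K) (hCa : IsCompOf G K Ca) (haCa : a ∈ Ca)
    {v : V} (hv : v ∈ K) (hvCa : ∀ u ∈ Ca, ¬ G.Adj u v) : ¬ IsPMC G (K ∪ {a}) := by
  intro h
  obtain ⟨D, hD, ⟨u, hu, huv⟩, ⟨b, hb, hba⟩⟩ := h.2 v (Or.inl hv) a (Or.inr rfl)
    (by rintro rfl; exact haK hv) fun hva => hvCa a haCa hva.symm
  have hDCa := hCa.subset_of_adj (Set.disjoint_union_right.1 hD.2.1).1 hD.2.2.1 hb haCa hba.symm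
  exact hvCa u (hDCa hu) huv

theorem xor_isPMC_of_isPMCWrt (hK : IsPMCWrt G (K ∪ {a}) K) (haK : a ∉ K) :
    Xor (IsPMC G K) (IsPMC G (K ∪ {a})) := by
  obtain ⟨Ca, hCa, haCa⟩ := exists_isCompOf_superset (Set.disjoint_singleton_left.2 haK)
    ((connected_iff _).2 ⟨Preconnected.of_subsingleton, ⟨⟨a, rfl⟩⟩⟩ : (G.induce {a}).Connected)
  by_cases hfull : ∀ v ∈ K, ∃ u ∈ Ca, G.Adj u v
  · exact Or.inr ⟨isPMC_union_singleton hK ⟨hCa, hfull⟩ (haCa rfl), fun h => h.1 Ca hCa hfull⟩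
  · push Not at hfull
    obtain ⟨v, hv, hvCa⟩ := hfull
    exact Or.inl ⟨isPMC_of_forall_not_adj hK hCa (haCa rfl) hv hvCa,
      not_isPMC_union_singleton haK hCa (haCa rfl) hv hvCa⟩

end

theorem stmt4_general (G : SimpleGraph V) (a : V)
    (K : Set {v : V // v ∈ ({v : V | v ≠ a} : Set V)})
    (hK : IsPMC (G.induce {v : V | v ≠ a}) K) :
    Xor' (IsPMC G (Subtype.val '' K)) (IsPMC G (Subtype.val '' K ∪ {a})) := by
  have hK' := hK.isPMCWrt_image
  rw [Set.compl_ne_eq_singleton] at hK'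
  exact xor_isPMC_of_isPMCWrt hK' fun ⟨x, _, hxa⟩ => x.2 hxa

theorem stmt4 [Fintype V] (G : SimpleGraph V) (a : V)
    (K : Set {v : V // v ∈ ({v : V | v ≠ a} : Set V)})
    (hK : IsPMC (G.induce {v : V | v ≠ a}) K) :
    Xor' (IsPMC G (Subtype.val '' K)) (IsPMC G (Subtype.val '' K ∪ {a})) :=
  stmt4_general G a K hK
end

section
/- Two distinct potential maximal cliques of the same graph are incomparable under inclusion: if K1 and K2 are potential maximal cliques of G with K1 ⊆ K2, then K1 = K2. -/
open SimpleGraph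

variable {V : Type*}

/-- Inclusion hom between induced subgraphs. -/
def induceHomSub (G : SimpleGraph V) {S T : Set V} (h : S ⊆ T) :
    G.induce S →g G.induce T where
  toFun v := ⟨v.1, h v.2⟩
  map_rel' := fun hadj => hadj

lemma reach_mono (G : SimpleGraph V) {S T : Set V} (h : S ⊆ T) {a b : ↥S}
    (hr : (G.induce S).Reachable a b) :
    (G.induce T).Reachable ⟨a.1, h a.2⟩ ⟨b.1, h b.2⟩ :=
  hr.map (induceHomSub G h)

lemma walk_support_reach (G : SimpleGraph V) {S C : Set V} :
    ∀ {a b : ↥S} (p : (G.induce S).Walk a b),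
      (∀ v ∈ p.support, (v : V) ∈ C) →
      ∃ (ha : (a : V) ∈ C) (hb : (b : V) ∈ C),
        (G.induce C).Reachable ⟨a, ha⟩ ⟨b, hb⟩ := by
  intro a b p
  induction p with
  | nil =>
    intro h
    exact ⟨h _ (by simp), h _ (by simp), Reachable.refl _⟩
  | @cons u v w huv p ih =>
    intro h
    have hu : (u : V) ∈ C := h u (by simp)
    have hsub : ∀ x ∈ p.support, (x : V) ∈ C := fun x hx => h x (by simp [hx])
    obtain ⟨hv, hw, hr⟩ := ih hsub
    refine ⟨hu, hw, ?_⟩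
    have hadj : (G.induce C).Adj ⟨u, hu⟩ ⟨v, hv⟩ := huv
    exact hadj.reachable.trans hr

/-- Every vertex outside `K` lies in some connected component of `G \ K`. -/
lemma exists_comp (G : SimpleGraph V) (K : Set V) {x : V} (hx : x ∉ K) :
    ∃ C : Set V, IsCompOf G K C ∧ x ∈ C := by
  have hxS : x ∈ (Kᶜ : Set V) := hx
  set S : Set V := Kᶜ with hS
  set C : Set V := {y | ∃ hy : y ∈ S, (G.induce S).Reachable ⟨x, hxS⟩ ⟨y, hy⟩} with hC
  have hxC : x ∈ C := ⟨hxS, Reachable.refl _⟩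
  have hCS : C ⊆ S := fun y hy => hy.1
  refine ⟨C, ⟨⟨x, hxC⟩, ?_, ?_, ?_⟩, hxC⟩
  · exact Set.disjoint_left.mpr fun y hy => hCS hy
  · rw [connected_iff]
    constructor
    · rintro ⟨a, ha, hra⟩ ⟨b, hb, hrb⟩
      have hr : (G.induce S).Reachable ⟨a, ha⟩ ⟨b, hb⟩ := hra.symm.trans hrb
      obtain ⟨p⟩ := hr
      have hsupp : ∀ v ∈ p.support, (v : V) ∈ C := by
        classical
        intro v hv
        have : (G.induce S).Reachable ⟨a, ha⟩ v := (p.takeUntil v hv).reachable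
        exact ⟨v.2, hra.trans this⟩
      obtain ⟨ha', hb', hr'⟩ := walk_support_reach G p hsupp
      exact hr'
    · exact ⟨⟨x, hxC⟩⟩
  · intro D hCD hDK hDconn
    have hDS : D ⊆ S := fun y hy => (Set.disjoint_left.mp hDK) hy
    apply Set.Subset.antisymm _ hCD
    intro d hd
    have hxD : x ∈ D := hCD hxC
    have hr : (G.induce D).Reachable ⟨x, hxD⟩ ⟨d, hd⟩ := hDconn.preconnected _ _
    exact ⟨hDS hd, reach_mono G hDS hr⟩

theorem stmt5 [Fintype V] (G : SimpleGraph V) (K1 K2 : Set V)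
    (h1 : IsPMC G K1) (h2 : IsPMC G K2) (hsub : K1 ⊆ K2) : K1 = K2 := by
  by_contra hne
  -- There is some x ∈ K2 \ K1
  have : ∃ x ∈ K2, x ∉ K1 := by
    by_contra h
    push_neg at h
    exact hne (Set.Subset.antisymm hsub h)
  obtain ⟨x, hxK2, hxK1⟩ := this
  -- Component of G \ K1 containing x
  obtain ⟨C, hC, hxC⟩ := exists_comp G K1 hxK1
  obtain ⟨hCne, hCdisj, hCconn, hCmax⟩ := hC
  -- C is full for K1, contradicting h1.1
  refine h1.1 C ⟨hCne, hCdisj, hCconn, hCmax⟩ ?_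
  intro v hvK1
  have hvK2 : v ∈ K2 := hsub hvK1
  have hvx : v ≠ x := fun h => hxK1 (h ▸ hvK1)
  by_cases hadj : G.Adj x v
  · exact ⟨x, hxC, hadj⟩
  · -- use PMC property of K2 on x and v
    obtain ⟨D, hD, ⟨u1, hu1D, hu1x⟩, ⟨u2, hu2D, hu2v⟩⟩ :=
      h2.2 x hxK2 v hvK2 (Ne.symm hvx) hadj
    obtain ⟨hDne, hDdisj, hDconn, hDmax⟩ := hD
    -- C ∪ D is connected and disjoint from K1, containing C; hence D ⊆ C
    have hdisj : Disjoint (C ∪ D) K1 :=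
      Set.disjoint_union_left.mpr ⟨hCdisj, hDdisj.mono_right hsub⟩
    have hxCD : x ∈ C ∪ D := Or.inl hxC
    have hu1CD : u1 ∈ C ∪ D := Or.inr hu1D
    have hconn : (G.induce (C ∪ D)).Connected := by
      rw [connected_iff]
      constructor
      · have key : ∀ w : ↥(C ∪ D), (G.induce (C ∪ D)).Reachable ⟨x, hxCD⟩ w := by
          rintro ⟨w, hw | hw⟩
          · exact reach_mono G Set.subset_union_left
              (hCconn.preconnected ⟨x, hxC⟩ ⟨w, hw⟩)
          · have h1 : (G.induce (C ∪ D)).Adj ⟨x, hxCD⟩ ⟨u1, hu1CD⟩ := hu1x.symm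
            have h2 : (G.induce (C ∪ D)).Reachable ⟨u1, hu1CD⟩ ⟨w, Or.inr hw⟩ :=
              reach_mono G Set.subset_union_right
                (hDconn.preconnected ⟨u1, hu1D⟩ ⟨w, hw⟩)
            exact h1.reachable.trans h2
        intro a b
        exact (key a).symm.trans (key b)
      · exact ⟨⟨x, hxCD⟩⟩
    have heq : C ∪ D = C := hCmax (C ∪ D) Set.subset_union_left hdisj hconn
    have hu2C : u2 ∈ C := heq ▸ (Or.inr hu2D : u2 ∈ C ∪ D)
    exact ⟨u2, hu2C, hu2v⟩
end

section
/- Let G be a graph with vertices ordered v_1, ..., v_n, and let G_i denote the subgraph induced by {v_1, ..., v_i}. Let K be a potential maximal clique of G_i for some i < n. If K is not a potential maximal clique of G_{i+1}, then for every j with i < j ≤ n, K is not a potential maximal clique of G_j. -/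
open SimpleGraph

variable {V : Type*}

/-- `C` is a connected component of `G[W] \ K`, where `G[W]` is the subgraph of
`G` induced by `W`. -/
def IsCompOfIn (G : SimpleGraph V) (W K C : Set V) : Prop :=
  C.Nonempty ∧ C ⊆ W ∧ Disjoint C K ∧ (G.induce C).Connected ∧
    ∀ D : Set V, C ⊆ D → D ⊆ W → Disjoint D K → (G.induce D).Connected → D = C

/-- `K` is a potential maximal clique of the subgraph of `G` induced by `W`
(Bouchitté–Todinca characterization). -/
def IsPMCIn (G : SimpleGraph V) (W K : Set V) : Prop :=
  K ⊆ W ∧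
  (∀ C : Set V, IsCompOfIn G W K C → ¬ ∀ v ∈ K, ∃ u ∈ C, G.Adj u v) ∧
  (∀ x ∈ K, ∀ y ∈ K, x ≠ y → ¬ G.Adj x y →
    ∃ C : Set V, IsCompOfIn G W K C ∧ (∃ u ∈ C, G.Adj u x) ∧ (∃ u ∈ C, G.Adj u y))

section

variable [Finite V] {G : SimpleGraph V} {W W' W'' K C : Set V}

lemma exists_isCompOfIn_superset (hne : C.Nonempty) (hCW : C ⊆ W) (hCK : Disjoint C K)
    (hconn : (G.induce C).Connected) : ∃ D, IsCompOfIn G W K D ∧ C ⊆ D := by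
  let S : Set (Set V) := {D | C ⊆ D ∧ D ⊆ W ∧ Disjoint D K ∧ (G.induce D).Connected}
  obtain ⟨D, hD, hmax⟩ :=
    S.toFinite.exists_maximalFor id S ⟨C, subset_rfl, hCW, hCK, hconn⟩
  refine ⟨D, ⟨hne.mono hD.1, hD.2.1, hD.2.2.1, hD.2.2.2, ?_⟩, hD.1⟩
  intro D' hDD' hD'W hD'K hD'conn
  exact (hmax ⟨hD.1.trans hDD', hD'W, hD'K, hD'conn⟩ hDD').antisymm hDD'

lemma IsCompOfIn.exists_superset_of_subset (hC : IsCompOfIn G W K C) (hW : W ⊆ W') :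
    ∃ D, IsCompOfIn G W' K D ∧ C ⊆ D :=
  exists_isCompOfIn_superset hC.1 (hC.2.1.trans hW) hC.2.2.1 hC.2.2.2.1

/-- Components only grow as the host set grows, so condition (b) passes from `W` up to `W'`,
while a full component in `W'` would grow into a full component in `W''`. -/
lemma IsPMCIn.of_subset_of_subset (h : IsPMCIn G W K) (h'' : IsPMCIn G W'' K)
    (hW : W ⊆ W') (hW' : W' ⊆ W'') : IsPMCIn G W' K := by
  refine ⟨h.1.trans hW, fun C hC hfull => ?_, fun x hx y hy hxy hadj => ?_⟩
  · obtain ⟨D, hD, hCD⟩ := hC.exists_superset_of_subset hW'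
    exact h''.2.1 D hD fun v hv =>
      let ⟨u, hu, huv⟩ := hfull v hv
      ⟨u, hCD hu, huv⟩
  · obtain ⟨C, hC, ⟨u, hu, hux⟩, ⟨w, hw, hwy⟩⟩ := h.2.2 x hx y hy hxy hadj
    obtain ⟨D, hD, hCD⟩ := hC.exists_superset_of_subset hW
    exact ⟨D, hD, ⟨u, hCD hu, hux⟩, ⟨w, hCD hw, hwy⟩⟩

end

theorem stmt6_general {n : ℕ} (G : SimpleGraph (Fin n)) (i : ℕ)
    (K : Set (Fin n))
    (hKi : IsPMCIn G {v : Fin n | v.val < i} K)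
    (hnot : ¬ IsPMCIn G {v : Fin n | v.val < i + 1} K) :
    ∀ j : ℕ, i < j → j ≤ n → ¬ IsPMCIn G {v : Fin n | v.val < j} K := by
  intro j hij _ hKj
  exact hnot (hKi.of_subset_of_subset hKj (fun _ hv => Nat.lt_succ_of_lt hv)
    (fun _ hv => Nat.lt_of_lt_of_le hv hij))

theorem stmt6 {n : ℕ} (G : SimpleGraph (Fin n)) (i : ℕ) (hi : i < n)
    (K : Set (Fin n))
    (hKi : IsPMCIn G {v : Fin n | v.val < i} K)
    (hnot : ¬ IsPMCIn G {v : Fin n | v.val < i + 1} K) :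
    ∀ j : ℕ, i < j → j ≤ n → ¬ IsPMCIn G {v : Fin n | v.val < j} K :=
  stmt6_general G i K hKi hnot
end

section
/- Let G be a graph with vertex ordering v_1, ..., v_n and induced subgraphs G_i on {v_1, ..., v_i}. For every potential maximal clique K of G_i and every j with i ≤ j ≤ n, there exists a potential maximal clique K' of G_j with K ⊆ K' ⊆ K ∪ {v_{i+1}, ..., v_j}. -/
open SimpleGraph

variable {V : Type*}

/-! Vertices are added one at a time. Let `K` be a PMC of `G[W]`, `a ∉ W`, and `Cₐ` the
component of `G[W + a] \ K` containing `a`; the other components of `G[W + a] \ K` are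
components of `G[W] \ K`, and every component of `G[W] \ K` grows into one of `G[W + a] \ K`.
If `Cₐ` is not full for `K`, then `K` is still a PMC. If it is, then `K + a` is a PMC: removing
`K + a` leaves exactly the components of `G[W] \ K`, and a non-neighbour `y ∈ K` of `a` has a
neighbour in `Cₐ`, whose component in `G[W] \ K` lies inside the connected set `Cₐ` and so can
only leave it towards `a`. -/

open Set

section

variable {G : SimpleGraph V} {W K W' K' C D : Set V}

theorem IsCompOfIn.subset_sdiff (hC : IsCompOfIn G W K C) : C ⊆ W \ K :=
  Set.subset_sdiff.2 ⟨hC.2.1, hC.2.2.1⟩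

theorem IsCompOfIn.connected (hC : IsCompOfIn G W K C) : (G.induce C).Connected :=
  hC.2.2.2.1

theorem isCompOfIn_iff_maximal :
    IsCompOfIn G W K C ↔ Maximal (fun D => D ⊆ W \ K ∧ (G.induce D).Connected) C := by
  constructor
  · rintro ⟨-, hCW, hCK, hconn, hmax⟩
    refine ⟨⟨Set.subset_sdiff.2 ⟨hCW, hCK⟩, hconn⟩, fun D ⟨hDWK, hD⟩ hCD => ?_⟩
    exact (hmax D hCD (hDWK.trans sdiff_subset) (Set.subset_sdiff.1 hDWK).2 hD).le
  · rintro ⟨⟨hCWK, hconn⟩, hmax⟩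
    refine ⟨nonempty_coe_sort.1 hconn.nonempty, (Set.subset_sdiff.1 hCWK).1,
      (Set.subset_sdiff.1 hCWK).2, hconn, fun D hCD hDW hDK hD => ?_⟩
    exact (hmax ⟨Set.subset_sdiff.2 ⟨hDW, hDK⟩, hD⟩ hCD).antisymm hCD

theorem isCompOfIn_congr (h : W \ K = W' \ K') :
    IsCompOfIn G W K C ↔ IsCompOfIn G W' K' C := by
  simp only [isCompOfIn_iff_maximal, h]

theorem IsCompOfIn.subset_of_connected (hC : IsCompOfIn G W K C) (hDWK : D ⊆ W \ K)
    (hD : (G.induce D).Connected) (hCD : (C ∩ D).Nonempty) : D ⊆ C := by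
  rw [isCompOfIn_iff_maximal] at hC
  exact subset_union_right.trans <| hC.le_of_ge ⟨union_subset hC.prop.1 hDWK,
    induce_union_connected hC.prop.2.preconnected hD.preconnected hCD⟩ subset_union_left

theorem exists_isCompOfIn_mem {v : V} (hv : v ∈ W \ K) : ∃ C, IsCompOfIn G W K C ∧ v ∈ C := by
  set S := {D : Set V | D ⊆ W \ K ∧ (G.induce D).Connected ∧ v ∈ D}
  have hvS : {v} ∈ S := ⟨singleton_subset_iff.2 hv, by simp, rfl⟩
  refine ⟨⋃₀ S, isCompOfIn_iff_maximal.2 ⟨⟨sUnion_subset fun D hD => hD.1, ?_⟩, ?_⟩,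
    subset_sUnion_of_mem hvS rfl⟩
  · exact induce_sUnion_connected_of_pairwise_not_disjoint ⟨_, hvS⟩
      (fun hD hD' => ⟨v, hD.2.2, hD'.2.2⟩) (fun hD => hD.2.1)
  · exact fun D hD hSD => subset_sUnion_of_mem ⟨hD.1, hD.2, hSD (subset_sUnion_of_mem hvS rfl)⟩

theorem IsCompOfIn.exists_superset (hC : IsCompOfIn G W K C) (h : W \ K ⊆ W' \ K') :
    ∃ C', IsCompOfIn G W' K' C' ∧ C ⊆ C' := by
  obtain ⟨v, hv⟩ := hC.1
  obtain ⟨C', hC', hvC'⟩ := exists_isCompOfIn_mem (G := G) (h (hC.subset_sdiff hv))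
  exact ⟨C', hC', hC'.subset_of_connected (hC.subset_sdiff.trans h) hC.connected ⟨v, hvC', hv⟩⟩

theorem IsCompOfIn.of_subset (hC : IsCompOfIn G W' K' C) (h : W \ K ⊆ W' \ K')
    (hCWK : C ⊆ W \ K) : IsCompOfIn G W K C := by
  rw [isCompOfIn_iff_maximal] at hC ⊢
  exact hC.mono (fun D hD => ⟨hD.1.trans h, hD.2⟩) ⟨hCWK, hC.prop.2⟩

theorem IsCompOfIn.exists_adj_of_connected (hC : IsCompOfIn G W K C) (hCD : C ⊆ D)
    (hD : (G.induce D).Connected) {d : V} (hd : d ∈ D) (hdC : d ∉ C) :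
    ∃ x ∈ C, ∃ y ∈ D, y ∉ W \ K ∧ G.Adj x y := by
  obtain ⟨c, hc⟩ := hC.1
  obtain ⟨p⟩ := hD.preconnected ⟨c, hCD hc⟩ ⟨d, hd⟩
  obtain ⟨⟨⟨x, y⟩, hxy⟩, -, hx, hy⟩ := p.exists_boundary_dart {z : D | z.1 ∈ C} hc hdC
  refine ⟨x, hx, y, y.2, fun hyWK => hy ?_, hxy⟩
  exact hC.subset_of_connected (insert_subset (hC.subset_sdiff hx) (singleton_subset_iff.2 hyWK))
    (induce_pair_connected_of_adj hxy) ⟨x, hx, mem_insert _ _⟩ (mem_insert_of_mem _ rfl)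

end

namespace IsPMCIn

variable {G : SimpleGraph V} {W K Ca : Set V} {a : V}

theorem insert_of_forall_adj (hK : IsPMCIn G W K) (ha : a ∉ W)
    (hCa : IsCompOfIn G (insert a W) K Ca) (haCa : a ∈ Ca)
    (hfull : ∀ v ∈ K, ∃ u ∈ Ca, G.Adj u v) : IsPMCIn G (insert a W) (insert a K) := by
  obtain ⟨hKW, hnofull, hcover⟩ := hK
  have hdiff : insert a W \ insert a K = W \ K := by
    ext v; by_cases hv : v = a <;> simp_all
  have hcover_a : ∀ y ∈ K, ¬ G.Adj a y →
      ∃ C, IsCompOfIn G W K C ∧ (∃ u ∈ C, G.Adj u a) ∧ ∃ u ∈ C, G.Adj u y := by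
    intro y hy hay
    obtain ⟨u, huCa, huy⟩ := hfull y hy
    have hu : u ∈ W \ K := by
      have := hCa.subset_sdiff huCa
      exact ⟨this.1.resolve_left (by rintro rfl; exact hay huy), this.2⟩
    obtain ⟨C, hC, huC⟩ := exists_isCompOfIn_mem (G := G) hu
    have hCCa : C ⊆ Ca := hCa.subset_of_connected
      (hC.subset_sdiff.trans (sdiff_subset_sdiff_left (subset_insert a W))) hC.connected
      ⟨u, huCa, huC⟩
    obtain ⟨x, hxC, z, hzCa, hz, hxz⟩ := hC.exists_adj_of_connected hCCa hCa.connected haCa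
      fun haC => ha (hC.subset_sdiff haC).1
    obtain rfl : z = a := by
      have := hCa.subset_sdiff hzCa
      exact this.1.resolve_right fun hzW => hz ⟨hzW, this.2⟩
    exact ⟨C, hC, ⟨x, hxC, hxz⟩, u, huC, huy⟩
  simp only [IsPMCIn, isCompOfIn_congr hdiff]
  refine ⟨insert_subset_insert hKW,
    fun C hC hCfull => hnofull C hC fun v hv => hCfull v (mem_insert_of_mem a hv), ?_⟩
  rintro x (rfl | hx) y (rfl | hy) hxy hadj
  · exact absurd rfl hxy
  · exact hcover_a y hy hadj
  · obtain ⟨C, hC, hCa', hCx⟩ := hcover_a x hx (fun h => hadj h.symm)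
    exact ⟨C, hC, hCx, hCa'⟩
  · exact hcover x hx y hy hxy hadj

theorem of_not_forall_adj (hK : IsPMCIn G W K) (hCa : IsCompOfIn G (insert a W) K Ca)
    (haCa : a ∈ Ca) (hfull : ¬ ∀ v ∈ K, ∃ u ∈ Ca, G.Adj u v) : IsPMCIn G (insert a W) K := by
  obtain ⟨hKW, hnofull, hcover⟩ := hK
  have hWK : W \ K ⊆ insert a W \ K := sdiff_subset_sdiff_left (subset_insert a W)
  refine ⟨hKW.trans (subset_insert a W), fun C hC hCfull => ?_, fun x hx y hy hxy hadj => ?_⟩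
  · by_cases haC : a ∈ C
    · have hCCa : C ⊆ Ca := hCa.subset_of_connected hC.subset_sdiff hC.connected ⟨a, haCa, haC⟩
      exact hfull fun v hv => (hCfull v hv).imp fun u => And.imp_left (@hCCa u)
    · refine hnofull C (hC.of_subset hWK fun v hv => ?_) hCfull
      have := hC.subset_sdiff hv
      exact ⟨this.1.resolve_left (by rintro rfl; exact haC hv), this.2⟩
  · obtain ⟨C, hC, hxC, hyC⟩ := hcover x hx y hy hxy hadj
    obtain ⟨C', hC', hCC'⟩ := hC.exists_superset hWK
    exact ⟨C', hC', hxC.imp fun u => And.imp_left (@hCC' u),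
      hyC.imp fun u => And.imp_left (@hCC' u)⟩

theorem exists_insert (hK : IsPMCIn G W K) (ha : a ∉ W) :
    ∃ K', IsPMCIn G (insert a W) K' ∧ K ⊆ K' ∧ K' ⊆ insert a K := by
  obtain ⟨Ca, hCa, haCa⟩ := exists_isCompOfIn_mem (G := G) (W := insert a W) (K := K)
    ⟨mem_insert a W, fun haK => ha (hK.1 haK)⟩
  by_cases hfull : ∀ v ∈ K, ∃ u ∈ Ca, G.Adj u v
  · exact ⟨_, hK.insert_of_forall_adj ha hCa haCa hfull, subset_insert a K, subset_rfl⟩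
  · exact ⟨K, hK.of_not_forall_adj hCa haCa hfull, subset_rfl, subset_insert a K⟩

theorem exists_union {S : Set V} (hK : IsPMCIn G W K) (hS : S.Finite) (hSW : Disjoint S W) :
    ∃ K', IsPMCIn G (W ∪ S) K' ∧ K ⊆ K' ∧ K' ⊆ K ∪ S := by
  induction S, hS using Set.Finite.induction_on with
  | empty => exact ⟨K, by simpa using hK, subset_rfl, subset_union_left⟩
  | @insert a S haS _ ih =>
    obtain ⟨K', hK', hKK', hK'S⟩ := ih (hSW.mono_left (subset_insert a S))
    have haWS : a ∉ W ∪ S := fun h => h.elim (disjoint_left.1 hSW (mem_insert a S)) haS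
    obtain ⟨K'', hK'', hK'K'', hK''S⟩ := hK'.exists_insert haWS
    refine ⟨K'', by rwa [union_insert], hKK'.trans hK'K'', hK''S.trans ?_⟩
    rw [union_insert]
    exact insert_subset_insert hK'S

end IsPMCIn

theorem stmt7 {n : ℕ} (G : SimpleGraph (Fin n)) (i : ℕ) (K : Set (Fin n))
    (hK : IsPMCIn G {v : Fin n | v.val < i} K) :
    ∀ j : ℕ, i ≤ j → j ≤ n →
      ∃ K' : Set (Fin n), IsPMCIn G {v : Fin n | v.val < j} K' ∧
        K ⊆ K' ∧ K' ⊆ K ∪ {v : Fin n | i ≤ v.val ∧ v.val < j} := by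
  intro j hij _
  have hW : {v : Fin n | v.val < i} ∪ {v | i ≤ v.val ∧ v.val < j} = {v | v.val < j} := by
    ext v
    simp only [mem_union, mem_ofPred_eq]
    omega
  obtain ⟨K', hK', hKK', hK'S⟩ := hK.exists_union (S := {v | i ≤ v.val ∧ v.val < j})
    (toFinite _) (disjoint_left.2 fun v hv hv' => by simp only [mem_ofPred_eq] at hv hv'; omega)
  exact ⟨K', hW ▸ hK', hKK', hK'S⟩
end
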